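/- arXiv:1010.2991 — 3 statements merged into one kernel-verified Lean document; each statement's English description precedes it below -/
import Mathlib

section
/- Let C ⊆ E be a convex set and let T be a proper touching cone of C. Then T is a normal cone of C if and only if there exists a nonzero vector in ri(T) that is sharp normal for C; moreover, if some nonzero vector in ri(T) is sharp normal for C, then every nonzero vector in ri(T) is sharp normal for C. -/
open scoped Pointwise RealInnerProductSpace

variable {E : Type*} [NormedAddCommGroup E] [InnerProductSpace ℝ E] [FiniteDimensional ℝ E]

/-- `F` is a face of the convex set `C`: a convex subset of `C` such that whenever an open
segment between two points of `C` meets `F`, both endpoints belong to `F`. -/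
def IsFace (C F : Set E) : Prop :=
  Convex ℝ F ∧ F ⊆ C ∧
    ∀ x ∈ C, ∀ y ∈ C, (openSegment ℝ x y ∩ F).Nonempty → x ∈ F ∧ y ∈ F

/-- The exposed face `F⊥(C,u)` of `C` by the vector `u`: the points of `C` where `⟨u,·⟩`
attains its supremum over `C`. -/
def expFace (C : Set E) (u : E) : Set E :=
  {x ∈ C | ∀ y ∈ C, ⟪u, y⟫ ≤ ⟪u, x⟫}

/-- `F` is an exposed face of `C`: either `∅`, or `C`, or `F⊥(C,u)` for some nonzero `u`. -/
def IsExpFace (C F : Set E) : Prop :=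
  F = ∅ ∨ F = C ∨ ∃ u : E, u ≠ 0 ∧ F = expFace C u

/-- The normal cone `N(C,x)` of `C` at the point `x`. -/
def normalCone (C : Set E) (x : E) : Set E :=
  {u | ∀ y ∈ C, ⟪u, y - x⟫ ≤ 0}

/-- The normal cone `N(C,F)` of `C` at a subset `F`; for a nonempty convex `F ⊆ C` it agrees
with `normalCone C x` for any `x` in the relative interior of `F` (all these coincide), and
for `F = ∅` it is all of `E`. -/
def normalConeOf (C F : Set E) : Set E :=
  ⋂ x ∈ intrinsicInterior ℝ F, normalCone C x

/-- `N` is a normal cone of `C`: the normal cone of some face of `C`. -/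
def IsNormalCone (C N : Set E) : Prop :=
  ∃ F, IsFace C F ∧ N = normalConeOf C F

/-- `T` is a touching cone of `C`: a nonempty face of a normal cone of `C`. -/
def IsTouchingCone (C T : Set E) : Prop :=
  T.Nonempty ∧ ∃ N, IsNormalCone C N ∧ IsFace N T

/-- The positive hull of a set: all finite nonnegative combinations (`posHull ∅ = {0}`). -/
def posHull (S : Set E) : Set E :=
  {x | ∃ (k : ℕ) (c : Fin k → ℝ) (s : Fin k → E),
    (∀ i, 0 ≤ c i) ∧ (∀ i, s i ∈ S) ∧ x = ∑ i, c i • s i}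

/-- A vector `u` is sharp normal for `C` if every `x ∈ ri(F⊥(C,u))` satisfies
`u ∈ ri(N(C,x))`. -/
def SharpNormal (C : Set E) (u : E) : Prop :=
  ∀ x ∈ intrinsicInterior ℝ (expFace C u), u ∈ intrinsicInterior ℝ (normalCone C x)

/-- A point `x` is sharp exposed in `C` if every nonzero `u ∈ ri(N(C,x))` satisfies
`x ∈ ri(F⊥(C,u))`. -/
def SharpExposed (C : Set E) (x : E) : Prop :=
  ∀ u ∈ intrinsicInterior ℝ (normalCone C x), u ≠ 0 → x ∈ intrinsicInterior ℝ (expFace C u)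

/-- The smallest exposed face of `C` containing `F`: the intersection of all exposed faces
of `C` containing `F`. -/
def supExp (C F : Set E) : Set E :=
  ⋂₀ {G | IsExpFace C G ∧ F ⊆ G}

/-- The polar body of `K`. -/
def polarBody (K : Set E) : Set E := {u | ∀ y ∈ K, ⟪u, y⟫ ≤ 1}

set_option linter.unusedSectionVars false
set_option linter.unusedVariables false
set_option linter.unreachableTactic false
set_option linter.unusedTactic false
set_option linter.unnecessarySeqFocus false

lemma tc_key {T : Set E} {y x : E} (hy : y ∈ intrinsicInterior ℝ T)
    (hx : x ∈ affineSpan ℝ T) :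
    ∃ t : ℝ, 0 < t ∧ y + t • (x - y) ∈ intrinsicInterior ℝ T ∧
      y + t • (y - x) ∈ intrinsicInterior ℝ T := by
  obtain ⟨y', hy', hyy⟩ := mem_intrinsicInterior.1 hy
  have hyspan : y ∈ affineSpan ℝ T := hyy ▸ y'.2
  have hmem : ∀ t : ℝ, y + t • (x - y) ∈ affineSpan ℝ T := by
    intro t
    have h := (affineSpan ℝ T).smul_vsub_vadd_mem t hx hyspan hyspan
    simpa [vsub_eq_sub, vadd_eq_add, add_comm] using h
  set f : ℝ → affineSpan ℝ T := fun t => ⟨y + t • (x - y), hmem t⟩ with hf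
  have hcont : Continuous f := by
    apply Continuous.subtype_mk
    fun_prop
  have hopen : IsOpen (f ⁻¹' interior (((↑) : affineSpan ℝ T → E) ⁻¹' T)) :=
    isOpen_interior.preimage hcont
  have h0 : (0 : ℝ) ∈ f ⁻¹' interior (((↑) : affineSpan ℝ T → E) ⁻¹' T) := by
    have : f 0 = y' := Subtype.ext (by simp [hf, hyy])
    simp only [Set.mem_preimage, this]
    exact hy'
  obtain ⟨ε, hε, hball⟩ := Metric.isOpen_iff.1 hopen 0 h0
  refine ⟨ε / 2, by positivity, ?_, ?_⟩
  · have h1 : f (ε / 2) ∈ interior (((↑) : affineSpan ℝ T → E) ⁻¹' T) := by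
      apply hball
      simp [Real.dist_eq, abs_of_pos, hε.le]
      rw [abs_of_pos (by positivity)]
      linarith
    exact mem_intrinsicInterior.2 ⟨f (ε / 2), h1, rfl⟩
  · have h1 : f (-(ε / 2)) ∈ interior (((↑) : affineSpan ℝ T → E) ⁻¹' T) := by
      apply hball
      simp [Real.dist_eq]
      rw [abs_of_pos (by positivity)]
      linarith
    have h2 : y + (ε / 2) • (y - x) = ↑(f (-(ε / 2))) := by
      simp only [hf, neg_smul]
      rw [← smul_neg, neg_sub]
    rw [h2]
    exact mem_intrinsicInterior.2 ⟨f (-(ε / 2)), h1, rfl⟩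

lemma tc_extend {F : Set E} {x y : E} (hy : y ∈ intrinsicInterior ℝ F) (hx : x ∈ F) :
    ∃ t : ℝ, 0 < t ∧ y + t • (y - x) ∈ F := by
  obtain ⟨t, ht, _, h2⟩ := tc_key hy (subset_affineSpan ℝ F hx)
  exact ⟨t, ht, intrinsicInterior_subset h2⟩

lemma tc_expFace_subset (C : Set E) (u : E) : expFace C u ⊆ C := fun _ hx => hx.1

lemma tc_convex_expFace {C : Set E} (hC : Convex ℝ C) (u : E) : Convex ℝ (expFace C u) := by
  intro x hx y hy a b ha hb hab
  refine ⟨hC hx.1 hy.1 ha hb hab, fun z hz => ?_⟩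
  have h1 : ⟪u, z⟫ ≤ ⟪u, x⟫ := hx.2 z hz
  have h2 : ⟪u, z⟫ ≤ ⟪u, y⟫ := hy.2 z hz
  have h3 : ⟪u, a • x + b • y⟫ = a * ⟪u, x⟫ + b * ⟪u, y⟫ := by
    rw [inner_add_right, real_inner_smul_right, real_inner_smul_right]
  have h4 : a * ⟪u, z⟫ + b * ⟪u, z⟫ = ⟪u, z⟫ := by rw [← add_mul, hab, one_mul]
  linarith [mul_le_mul_of_nonneg_left h1 ha, mul_le_mul_of_nonneg_left h2 hb]

lemma tc_mem_normalCone_iff {C : Set E} {x u : E} (hx : x ∈ C) :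
    u ∈ normalCone C x ↔ x ∈ expFace C u := by
  constructor
  · intro h
    refine ⟨hx, fun y hy => ?_⟩
    have := h y hy
    rw [inner_sub_right] at this
    linarith
  · intro h y hy
    rw [inner_sub_right]
    have := h.2 y hy
    linarith

lemma tc_convex_normalCone (C : Set E) (x : E) : Convex ℝ (normalCone C x) := by
  intro u hu w hw a b ha hb hab y hy
  have h1 := hu y hy
  have h2 := hw y hy
  have h3 : ⟪a • u + b • w, y - x⟫ = a * ⟪u, y - x⟫ + b * ⟪w, y - x⟫ := by
    rw [inner_add_left, real_inner_smul_left, real_inner_smul_left]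
  nlinarith

lemma tc_normalCone_mono {C F : Set E} (hFC : F ⊆ C) {x y : E}
    (hx : x ∈ intrinsicInterior ℝ F) (hy : y ∈ F) :
    normalCone C x ⊆ normalCone C y := by
  obtain ⟨t, ht, hz⟩ := tc_extend hx hy
  intro u hu
  have h1 : ⟪u, (x + t • (x - y)) - x⟫ ≤ 0 := hu _ (hFC hz)
  have h2 : ⟪u, x - y⟫ ≤ 0 := by
    rw [show (x + t • (x - y)) - x = t • (x - y) by abel, real_inner_smul_right] at h1
    nlinarith
  intro w hw
  have h3 : ⟪u, w - x⟫ ≤ 0 := hu w hw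
  have h4 : w - y = (w - x) + (x - y) := by abel
  rw [h4, inner_add_right]
  linarith

lemma tc_normalConeOf_eq {C F : Set E} (hFC : F ⊆ C) {x₀ : E}
    (hx₀ : x₀ ∈ intrinsicInterior ℝ F) :
    normalConeOf C F = normalCone C x₀ := by
  apply subset_antisymm
  · exact Set.biInter_subset_of_mem hx₀
  · exact Set.subset_iInter₂ fun x hx => tc_normalCone_mono hFC hx₀ (intrinsicInterior_subset hx)

lemma tc_face_absorb {S T K : Set E} (hT : IsFace S T) (hKS : K ⊆ S) {p : E}
    (hp : p ∈ intrinsicInterior ℝ K) (hpT : p ∈ T) : K ⊆ T := by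
  intro y hy
  obtain ⟨t, ht, hz⟩ := tc_extend hp hy
  have h1t : (0:ℝ) < 1 + t := by linarith
  have hmem : p ∈ openSegment ℝ y (p + t • (p - y)) := by
    refine ⟨t / (1 + t), 1 / (1 + t), by positivity, by positivity, by field_simp; ring, ?_⟩
    match_scalars <;> field_simp <;> ring
  exact ((hT.2.2 y (hKS hy) _ (hKS hz)) ⟨p, hmem, hpT⟩).1

lemma tc_inter_face {C : Set E} {x z : E} (hx : x ∈ C) (hz : z ∈ C) :
    IsFace (normalCone C x) (normalCone C z ∩ normalCone C x) := by
  refine ⟨(tc_convex_normalCone C z).inter (tc_convex_normalCone C x),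
    Set.inter_subset_right, ?_⟩
  rintro u hu w hw ⟨p, ⟨a, b, ha, hb, hab, hp⟩, hpz, hpx⟩
  have h1 : ⟪u, z - x⟫ ≤ 0 := hu z hz
  have h2 : ⟪w, z - x⟫ ≤ 0 := hw z hz
  have h3 : ⟪p, x - z⟫ ≤ 0 := hpz x hx
  have h3' : (0:ℝ) ≤ ⟪p, z - x⟫ := by
    rw [inner_sub_right] at h3 ⊢
    linarith
  have hpzx : ⟪p, z - x⟫ = a * ⟪u, z - x⟫ + b * ⟪w, z - x⟫ := by
    rw [← hp, inner_add_left, real_inner_smul_left, real_inner_smul_left]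
  have hu0 : ⟪u, z - x⟫ = 0 := by nlinarith
  have hw0 : ⟪w, z - x⟫ = 0 := by nlinarith
  constructor
  · refine ⟨fun y hy => ?_, hu⟩
    have h5 := hu y hy
    rw [inner_sub_right] at hu0 h5 ⊢
    linarith
  · refine ⟨fun y hy => ?_, hw⟩
    have h5 := hw y hy
    rw [inner_sub_right] at hw0 h5 ⊢
    linarith

lemma tc_expFace_isFace {C : Set E} (hC : Convex ℝ C) (u : E) : IsFace C (expFace C u) := by
  refine ⟨tc_convex_expFace hC u, tc_expFace_subset C u, ?_⟩
  rintro x hx y hy ⟨p, ⟨a, b, ha, hb, hab, hp⟩, hpC, hpmax⟩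
  have hxp : ⟪u, x⟫ ≤ ⟪u, p⟫ := hpmax x hx
  have hyp : ⟪u, y⟫ ≤ ⟪u, p⟫ := hpmax y hy
  have hpe : ⟪u, p⟫ = a * ⟪u, x⟫ + b * ⟪u, y⟫ := by
    rw [← hp, inner_add_right, real_inner_smul_right, real_inner_smul_right]
  have h4 : a * ⟪u, p⟫ + b * ⟪u, p⟫ = ⟪u, p⟫ := by rw [← add_mul, hab, one_mul]
  have hx' : ⟪u, p⟫ ≤ ⟪u, x⟫ := by
    have h5 : a * ⟪u, p⟫ ≤ a * ⟪u, x⟫ := by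
      linarith [mul_le_mul_of_nonneg_left hyp hb.le]
    exact le_of_mul_le_mul_left h5 ha
  have hy' : ⟪u, p⟫ ≤ ⟪u, y⟫ := by
    have h5 : b * ⟪u, p⟫ ≤ b * ⟪u, y⟫ := by
      linarith [mul_le_mul_of_nonneg_left hxp ha.le]
    exact le_of_mul_le_mul_left h5 hb
  exact ⟨⟨hx, fun z hz => le_trans (hpmax z hz) hx'⟩,
    ⟨hy, fun z hz => le_trans (hpmax z hz) hy'⟩⟩

lemma tc_allSharp {C T : Set E} (hC : Convex ℝ C) (hN : IsNormalCone C T)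
    (hT2 : T ≠ Set.univ) {v : E} (hv : v ∈ intrinsicInterior ℝ T) (hv0 : v ≠ 0) :
    SharpNormal C v := by
  obtain ⟨G, hG, rfl⟩ := hN
  have hGne : G.Nonempty := by
    rcases G.eq_empty_or_nonempty with h | h
    · exact absurd (by subst h; simp [normalConeOf, intrinsicInterior_empty]) hT2
    · exact h
  obtain ⟨g₀, hg₀⟩ := hGne.intrinsicInterior hG.1
  have hEq : normalConeOf C G = normalCone C g₀ := tc_normalConeOf_eq hG.2.1 hg₀
  rw [hEq] at hv
  intro x hx
  have hg₀C : g₀ ∈ C := hG.2.1 (intrinsicInterior_subset hg₀)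
  have hvN : v ∈ normalCone C g₀ := intrinsicInterior_subset hv
  have hg₀exp : g₀ ∈ expFace C v := (tc_mem_normalCone_iff hg₀C).1 hvN
  have hxexp : x ∈ expFace C v := intrinsicInterior_subset hx
  have hxC : x ∈ C := hxexp.1
  have hvx : v ∈ normalCone C x := (tc_mem_normalCone_iff hxC).2 hxexp
  have hsub : normalCone C x ⊆ normalCone C g₀ :=
    tc_normalCone_mono (tc_expFace_subset C v) hx hg₀exp
  have hface := tc_inter_face hg₀C hxC
  have hsub2 : normalCone C g₀ ⊆ normalCone C x ∩ normalCone C g₀ :=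
    tc_face_absorb hface (subset_refl _) hv ⟨hvx, hvN⟩
  have heq2 : normalCone C x = normalCone C g₀ :=
    subset_antisymm hsub (hsub2.trans Set.inter_subset_left)
  rw [heq2]
  exact hv

lemma tc_touching_normalCone {C T : Set E} (hT : IsTouchingCone C T)
    (hT2 : T ≠ Set.univ) :
    ∃ x₀ ∈ C, IsFace (normalCone C x₀) T := by
  obtain ⟨hTne, N, ⟨F, hF, rfl⟩, hTface⟩ := hT
  have hFne : F.Nonempty := by
    rcases F.eq_empty_or_nonempty with h | h
    · exfalso
      subst h
      have hNuniv : normalConeOf C (∅ : Set E) = Set.univ := by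
        simp [normalConeOf, intrinsicInterior_empty]
      rw [hNuniv] at hTface
      apply hT2
      obtain ⟨p, hpT⟩ := hTne
      apply Set.eq_univ_of_forall
      intro y
      have hmem : p ∈ openSegment ℝ y (p + (1:ℝ) • (p - y)) := by
        refine ⟨1/2, 1/2, by norm_num, by norm_num, by norm_num, ?_⟩
        match_scalars <;> norm_num
      exact (hTface.2.2 y trivial _ trivial ⟨p, hmem, hpT⟩).1
    · exact h
  obtain ⟨x₀, hx₀⟩ := hFne.intrinsicInterior hF.1
  have hEq : normalConeOf C F = normalCone C x₀ := tc_normalConeOf_eq hF.2.1 hx₀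
  rw [hEq] at hTface
  exact ⟨x₀, hF.2.1 (intrinsicInterior_subset hx₀), hTface⟩

lemma tc_toNormal {C T : Set E} (hC : Convex ℝ C) (hT : IsTouchingCone C T)
    (hT2 : T ≠ Set.univ) {v : E} (hv : v ∈ intrinsicInterior ℝ T) (hv0 : v ≠ 0)
    (hsharp : SharpNormal C v) : IsNormalCone C T := by
  obtain ⟨x₀, hx₀C, hTface⟩ := tc_touching_normalCone hT hT2
  have hvT : v ∈ T := intrinsicInterior_subset hv
  have hvN₀ : v ∈ normalCone C x₀ := hTface.2.1 hvT
  have hx₀exp : x₀ ∈ expFace C v := (tc_mem_normalCone_iff hx₀C).1 hvN₀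
  obtain ⟨x, hx⟩ :=
    Set.Nonempty.intrinsicInterior (tc_convex_expFace hC v) ⟨x₀, hx₀exp⟩
  have hxexp : x ∈ expFace C v := intrinsicInterior_subset hx
  have hxC : x ∈ C := hxexp.1
  have hvriNx : v ∈ intrinsicInterior ℝ (normalCone C x) := hsharp x hx
  have hvNx : v ∈ normalCone C x := intrinsicInterior_subset hvriNx
  have hsub : normalCone C x ⊆ normalCone C x₀ :=
    tc_normalCone_mono (tc_expFace_subset C v) hx hx₀exp
  have h1 : normalCone C x ⊆ T := tc_face_absorb hTface hsub hvriNx hvT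
  have hface := tc_inter_face hx₀C hxC
  have h2 : T ⊆ normalCone C x ∩ normalCone C x₀ :=
    tc_face_absorb hface hTface.2.1 hv ⟨hvNx, hvN₀⟩
  have hTx : T = normalCone C x :=
    subset_antisymm (h2.trans Set.inter_subset_left) h1
  exact ⟨expFace C v, tc_expFace_isFace hC v,
    by rw [hTx, tc_normalConeOf_eq (tc_expFace_subset C v) hx]⟩

lemma tc_exists_ri_nonzero {C T : Set E} (hT : IsTouchingCone C T)
    (hT1 : T ≠ (((((affineSpan ℝ C).direction)ᗮ : Submodule ℝ E)) : Set E))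
    (hT2 : T ≠ Set.univ) :
    ∃ v ∈ intrinsicInterior ℝ T, v ≠ 0 := by
  obtain ⟨x₀, hx₀C, hTface⟩ := tc_touching_normalCone hT hT2
  have hTne : T.Nonempty := hT.1
  -- T ≠ {0}
  have hTne0 : T ≠ {0} := by
    intro h
    apply hT1
    rw [h]
    ext w
    simp only [Set.mem_singleton_iff, SetLike.mem_coe]
    constructor
    · rintro rfl; exact zero_mem _
    · intro hw
      by_contra hw0
      -- w and -w are in normalCone C x₀
      have hwN : w ∈ normalCone C x₀ := by
        intro y hy
        have hdir : y - x₀ ∈ (affineSpan ℝ C).direction := by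
          have := AffineSubspace.vsub_mem_direction
            (subset_affineSpan ℝ C hy) (subset_affineSpan ℝ C hx₀C)
          simpa [vsub_eq_sub] using this
        have := (Submodule.mem_orthogonal _ w).1 hw _ hdir
        rw [real_inner_comm] at this
        rw [this]
      have hwN' : -w ∈ normalCone C x₀ := by
        intro y hy
        have h1 := hwN y hy
        rw [inner_neg_left]
        -- need : ⟪w, y - x₀⟫ = 0 so both hold; reprove equality
        have hdir : y - x₀ ∈ (affineSpan ℝ C).direction := by
          have := AffineSubspace.vsub_mem_direction
            (subset_affineSpan ℝ C hy) (subset_affineSpan ℝ C hx₀C)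
          simpa [vsub_eq_sub] using this
        have h2 := (Submodule.mem_orthogonal _ w).1 hw _ hdir
        rw [real_inner_comm] at h2
        rw [h2]
        simp
      have hmem : (0 : E) ∈ openSegment ℝ w (-w) := by
        refine ⟨1/2, 1/2, by norm_num, by norm_num, by norm_num, ?_⟩
        match_scalars <;> norm_num
      have := (hTface.2.2 w hwN _ hwN' ⟨0, hmem, by rw [h]; rfl⟩).1
      rw [h] at this
      exact hw0 this
  obtain ⟨v, hv⟩ := hTne.intrinsicInterior hTface.1
  by_cases hv0 : v = 0
  · subst hv0
    have h0T : (0 : E) ∈ T := intrinsicInterior_subset hv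
    have hwex : ∃ w ∈ T, w ≠ (0 : E) := by
      by_contra hcon
      push_neg at hcon
      apply hTne0
      ext z
      simp only [Set.mem_singleton_iff]
      exact ⟨fun hz => hcon z hz, fun hz => hz ▸ h0T⟩
    obtain ⟨w, hwT, hw0⟩ := hwex
    obtain ⟨t, ht, h1, _⟩ := tc_key hv (subset_affineSpan ℝ T hwT)
    refine ⟨t • w, ?_, smul_ne_zero (ne_of_gt ht) hw0⟩
    have heq : (0 : E) + t • (w - 0) = t • w := by simp
    rwa [heq] at h1
  · exact ⟨v, hv, hv0⟩

/-- A proper touching cone `T` of a convex set `C` is a normal cone of `C`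
iff there is a nonzero vector of `ri(T)` that is sharp normal for `C`; and if one nonzero
vector of `ri(T)` is sharp normal then all nonzero vectors of `ri(T)` are sharp normal. -/
theorem stmt_16 (C : Set E) (hC : Convex ℝ C) (T : Set E) (hT : IsTouchingCone C T)
    (hT1 : T ≠ (((((affineSpan ℝ C).direction)ᗮ : Submodule ℝ E)) : Set E))
    (hT2 : T ≠ Set.univ) :
    (IsNormalCone C T ↔ ∃ v ∈ intrinsicInterior ℝ T, v ≠ 0 ∧ SharpNormal C v) ∧
    ((∃ v ∈ intrinsicInterior ℝ T, v ≠ 0 ∧ SharpNormal C v) →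
      ∀ v ∈ intrinsicInterior ℝ T, v ≠ 0 → SharpNormal C v) := by
  constructor
  · constructor
    · intro hN
      obtain ⟨v, hv, hv0⟩ := tc_exists_ri_nonzero hT hT1 hT2
      exact ⟨v, hv, hv0, tc_allSharp hC hN hT2 hv hv0⟩
    · rintro ⟨v, hv, hv0, hsharp⟩
      exact tc_toNormal hC hT hT2 hv hv0 hsharp
  · rintro ⟨v, hv, hv0, hsharp⟩ w hw hw0
    exact tc_allSharp hC (tc_toNormal hC hT hT2 hv hv0 hsharp) hT2 hw hw0
end

section
/- Let C ⊆ E be a convex set and let F be a proper exposed face of C such that every touching cone of C contained in N(C,F) is a normal cone of C. Then F can be written as an intersection of coatoms of the exposed face lattice of C: there exist proper exposed faces G_1, …, G_d of C, each such that the only exposed face of C strictly containing it is C itself, with d ≤ dim(N(C,F)) − dim(lin(C)^⊥) and F = G_1 ∩ ⋯ ∩ G_d. -/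
open scoped Pointwise RealInnerProductSpace

variable {E : Type*} [NormedAddCommGroup E] [InnerProductSpace ℝ E] [FiniteDimensional ℝ E]

/-!
Write `F = F⊥(C,u)`, `D = lin C` and `N = N(C,F)`. The part `K = N ∩ D` is a salient closed
convex cone containing the projection `k` of `u` onto `D`, and `F = F⊥(C,k)`. By Minkowski's
theorem for such cones (proved by induction on dimension, pushing points to the relative boundary
and passing to a supporting face) followed by a conic Carathéodory reduction,
`k = ∑ cᵢ wᵢ` with `cᵢ > 0` and linearly independent `wᵢ` spanning extreme rays of `K`.
Each `Dᗮ + ℝ≥0 wᵢ` is then a face of `N`, i.e. a touching cone, hence by hypothesis a normal cone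
`N(C,Fᵢ)`; this leaves no room for an exposed face strictly between `Gᵢ = F⊥(C,wᵢ)` and `C`.
The `wᵢ` have a common maximiser in `ri F`, which gives `F = ⋂ Gᵢ`, and their linear independence
inside `D` gives `d + dim Dᗮ ≤ dim N`.
-/

open Module Set Filter Topology

variable {V : Type*} [NormedAddCommGroup V] [InnerProductSpace ℝ V]

section Faces

variable {C F G : Set V}

lemma isFace_iff_convex_isExtreme : IsFace C F ↔ Convex ℝ F ∧ IsExtreme ℝ C F :=
  ⟨fun ⟨hF, hFC, h⟩ => ⟨hF, hFC, fun _ hx _ hy z hz hzs => (h _ hx _ hy ⟨z, hzs, hz⟩).1⟩,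
    fun ⟨hF, hext⟩ => ⟨hF, hext.subset, fun _ hx _ hy ⟨_, hzs, hz⟩ =>
      ⟨hext.left_mem_of_mem_openSegment hx hy hz hzs,
        hext.right_mem_of_mem_openSegment hx hy hz hzs⟩⟩⟩

lemma IsFace.trans (hF : IsFace C F) (hG : IsFace F G) : IsFace C G := by
  rw [isFace_iff_convex_isExtreme] at *
  exact ⟨hG.1, hF.2.trans hG.2⟩

lemma isFace_self (hC : Convex ℝ C) : IsFace C C :=
  isFace_iff_convex_isExtreme.2 ⟨hC, IsExtreme.rfl⟩

end Faces

section ExposedFaces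

variable {C : Set V} {u v x : V}

lemma expFace_subset : expFace C u ⊆ C := fun _ hx => hx.1

lemma isFace_expFace (hC : Convex ℝ C) (u : V) : IsFace C (expFace C u) := by
  have h : IsExposed ℝ C (expFace C u) :=
    ContinuousLinearMap.toExposed.isExposed (l := innerSL ℝ u)
  exact isFace_iff_convex_isExtreme.2 ⟨h.convex hC, h.isExtreme⟩

lemma isClosed_expFace (hC : IsClosed C) (u : V) : IsClosed (expFace C u) :=
  (ContinuousLinearMap.toExposed.isExposed (l := innerSL ℝ u)).isClosed hC

lemma mem_expFace_iff_mem_normalCone (hx : x ∈ C) : x ∈ expFace C v ↔ v ∈ normalCone C x := by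
  simp only [expFace, normalCone, mem_ofPred_eq, inner_sub_right, sub_nonpos, hx, true_and]

lemma expFace_zero : expFace C 0 = C := by
  ext x
  simp [expFace]

lemma expFace_smul {t : ℝ} (ht : 0 < t) (v : V) : expFace C (t • v) = expFace C v := by
  ext x
  simp only [expFace, mem_ofPred_eq, real_inner_smul_left, mul_le_mul_iff_right₀ ht]

lemma inner_sub_eq_zero_of_mem_orthogonal {l y : V}
    (hl : l ∈ (affineSpan ℝ C).directionᗮ) (hx : x ∈ C) (hy : y ∈ C) : ⟪l, y - x⟫ = 0 :=
  (Submodule.mem_orthogonal' _ l).1 hl _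
    (AffineSubspace.vsub_mem_direction (subset_affineSpan ℝ C hy) (subset_affineSpan ℝ C hx))

lemma mem_orthogonal_of_forall_inner_sub_eq_zero (hx : x ∈ C)
    (h : ∀ y ∈ C, ⟪v, y - x⟫ = 0) : v ∈ (affineSpan ℝ C).directionᗮ := by
  rw [direction_affineSpan, vectorSpan_eq_span_vsub_set_right ℝ hx]
  refine Submodule.isOrtho_span.2 ?_ (Submodule.mem_span_singleton_self v)
  rintro _ rfl _ ⟨y, hy, rfl⟩
  exact h y hy

lemma expFace_add_of_mem_orthogonal {l : V} (hl : l ∈ (affineSpan ℝ C).directionᗮ) (v : V) :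
    expFace C (v + l) = expFace C v := by
  ext x
  refine and_congr_right fun hx => forall₂_congr fun y hy => ?_
  have := inner_sub_eq_zero_of_mem_orthogonal hl hx hy
  rw [inner_sub_right] at this
  simp only [inner_add_left]
  constructor <;> intro <;> linarith

lemma expFace_eq_self_iff (hC : C.Nonempty) :
    expFace C v = C ↔ v ∈ (affineSpan ℝ C).directionᗮ := by
  refine ⟨fun h => ?_, fun hv => by simpa [expFace_zero] using expFace_add_of_mem_orthogonal hv 0⟩
  obtain ⟨x, hx⟩ := hC
  refine mem_orthogonal_of_forall_inner_sub_eq_zero hx fun y hy => ?_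
  rw [← h] at hx hy
  rw [inner_sub_right]
  linarith [hx.2 y hy.1, hy.2 x hx.1]

end ExposedFaces

section Cones

structure IsClosedConvexCone (K : Set V) : Prop where
  isClosed : IsClosed K
  convex : Convex ℝ K
  zero_mem : (0 : V) ∈ K
  smul_mem : ∀ ⦃t : ℝ⦄, 0 ≤ t → ∀ ⦃x⦄, x ∈ K → t • x ∈ K

variable {K : Set V}

lemma isClosedConvexCone_halfSpace (a : V) : IsClosedConvexCone {u : V | ⟪u, a⟫ ≤ 0} where
  isClosed := isClosed_le (by fun_prop) continuous_const
  convex := convex_halfSpace_le ⟨fun x y => inner_add_left x y a,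
    fun t x => real_inner_smul_left x a t⟩ 0
  zero_mem := by simp
  smul_mem t ht x hx := by
    simpa only [mem_ofPred_eq, real_inner_smul_left] using mul_nonpos_of_nonneg_of_nonpos ht hx

lemma IsClosedConvexCone.inter {K' : Set V} (hK : IsClosedConvexCone K)
    (hK' : IsClosedConvexCone K') : IsClosedConvexCone (K ∩ K') where
  isClosed := hK.isClosed.inter hK'.isClosed
  convex := hK.convex.inter hK'.convex
  zero_mem := ⟨hK.zero_mem, hK'.zero_mem⟩
  smul_mem _ ht _ hx := ⟨hK.smul_mem ht hx.1, hK'.smul_mem ht hx.2⟩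

lemma IsClosedConvexCone.biInter {ι : Type*} {s : Set ι} {K : ι → Set V}
    (hK : ∀ i ∈ s, IsClosedConvexCone (K i)) : IsClosedConvexCone (⋂ i ∈ s, K i) where
  isClosed := isClosed_biInter fun i hi => (hK i hi).isClosed
  convex := convex_iInter₂ fun i hi => (hK i hi).convex
  zero_mem := mem_iInter₂.2 fun i hi => (hK i hi).zero_mem
  smul_mem _ ht _ hx := mem_iInter₂.2 fun i hi => (hK i hi).smul_mem ht (mem_iInter₂.1 hx i hi)

lemma Submodule.isClosedConvexCone [FiniteDimensional ℝ V] (W : Submodule ℝ V) :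
    IsClosedConvexCone (W : Set V) where
  isClosed := W.closed_of_finiteDimensional
  convex := W.convex
  zero_mem := W.zero_mem
  smul_mem t _ _ hx := W.smul_mem t hx

lemma IsClosedConvexCone.mem_of_forall_add_smul_mem (hK : IsClosedConvexCone K) {a b : V}
    (h : ∀ t : ℝ, 0 ≤ t → a + t • b ∈ K) : b ∈ K := by
  have hlim : Tendsto (fun t : ℝ => t⁻¹ • a + b) atTop (𝓝 b) := by
    simpa using ((tendsto_inv_atTop_zero (𝕜 := ℝ)).smul_const a).add_const b
  refine hK.isClosed.mem_of_tendsto hlim ?_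
  filter_upwards [eventually_gt_atTop 0] with t ht
  have := hK.smul_mem (inv_nonneg.2 ht.le) (h t ht.le)
  rwa [smul_add, smul_smul, inv_mul_cancel₀ ht.ne', one_smul] at this

lemma IsClosedConvexCone.mem_expFace_iff (hK : IsClosedConvexCone K) {v x : V}
    (hv : ∀ y ∈ K, ⟪v, y⟫ ≤ 0) : x ∈ expFace K v ↔ x ∈ K ∧ ⟪v, x⟫ = 0 :=
  ⟨fun hx => ⟨hx.1, le_antisymm (hv x hx.1) (by simpa using hx.2 0 hK.zero_mem)⟩,
    fun hx => ⟨hx.1, fun y hy => hx.2 ▸ hv y hy⟩⟩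

lemma isClosedConvexCone_expFace (hK : IsClosedConvexCone K) {v : V}
    (hv : ∀ y ∈ K, ⟪v, y⟫ ≤ 0) : IsClosedConvexCone (expFace K v) where
  isClosed := isClosed_expFace hK.isClosed v
  convex := (isFace_expFace hK.convex v).1
  zero_mem := (hK.mem_expFace_iff hv).2 ⟨hK.zero_mem, inner_zero_right v⟩
  smul_mem t ht x hx := by
    rw [hK.mem_expFace_iff hv] at hx ⊢
    exact ⟨hK.smul_mem ht hx.1, by rw [inner_smul_right, hx.2, mul_zero]⟩

end Cones

section RelativeBoundary

/-- For a convex cone `K`, points of `span K` lie in the interior of `orthThickening K` exactly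
when they lie in the relative interior of `K`; thickening lets us use ordinary interiors. -/
def orthThickening (K : Set V) : Set V := K + ((Submodule.span ℝ K)ᗮ : Set V)

variable {K : Set V}

lemma subset_orthThickening : K ⊆ orthThickening K :=
  fun k hk => ⟨k, hk, 0, zero_mem _, add_zero k⟩

lemma orthogonal_subset_orthThickening (h0 : (0 : V) ∈ K) :
    ((Submodule.span ℝ K)ᗮ : Set V) ⊆ orthThickening K :=
  fun p hp => ⟨0, h0, p, hp, zero_add p⟩

lemma Convex.orthThickening (hK : Convex ℝ K) : Convex ℝ (orthThickening K) :=
  hK.add (Submodule.convex _)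

lemma mem_of_mem_orthThickening {x : V} (hx : x ∈ Submodule.span ℝ K)
    (hxK : x ∈ orthThickening K) : x ∈ K := by
  obtain ⟨k, hk, p, hp, rfl⟩ := Set.mem_add.1 hxK
  have hpK : p ∈ Submodule.span ℝ K := by
    simpa using Submodule.sub_mem _ hx (Submodule.subset_span hk)
  rwa [show p = 0 from inner_self_eq_zero.1 (hp p hpK), add_zero]

lemma IsClosedConvexCone.exists_sub_smul_notMem_interior (hK : IsClosedConvexCone K)
    {a b : V} (ha : a ∈ K) (hb : b ∈ Submodule.span ℝ K) (hnb : -b ∉ K) :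
    ∃ s : ℝ, 0 ≤ s ∧ a - s • b ∈ K ∧ a - s • b ∉ interior (orthThickening K) := by
  set T := {s : ℝ | 0 ≤ s ∧ a - s • b ∈ K}
  have hT0 : (0 : ℝ) ∈ T := ⟨le_rfl, by simpa using ha⟩
  have hTclosed : IsClosed T := isClosed_Ici.inter (hK.isClosed.preimage (by fun_prop))
  have hTbdd : BddAbove T := by
    by_contra hunb
    refine hnb (hK.mem_of_forall_add_smul_mem (a := a) fun t ht => ?_)
    obtain ⟨s, ⟨hs0, hs⟩, hts⟩ := not_bddAbove_iff.1 hunb t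
    have hs0' : 0 < s := ht.trans_lt hts
    have hcomb : a + t • -b = (1 - t / s) • a + (t / s) • (a - s • b) := by
      rw [smul_sub, smul_smul, div_mul_cancel₀ t hs0'.ne']
      module
    rw [hcomb]
    exact hK.convex ha hs (by rw [sub_nonneg, div_le_one hs0']; exact hts.le)
      (div_nonneg ht hs0'.le) (by ring)
  obtain ⟨hs0, hsK⟩ : sSup T ∈ T := hTclosed.csSup_mem ⟨0, hT0⟩ hTbdd
  refine ⟨sSup T, hs0, hsK, fun hint => ?_⟩
  have hev : ∀ᶠ δ in 𝓝[>] (0 : ℝ), a - (sSup T + δ) • b ∈ interior (orthThickening K) :=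
    nhdsWithin_le_nhds <| ((by fun_prop : Continuous fun δ : ℝ => a - (sSup T + δ) • b).tendsto'
      0 _ (by simp)).eventually (isOpen_interior.mem_nhds hint)
  obtain ⟨δ, hδ, hδpos⟩ := (hev.and self_mem_nhdsWithin).exists
  have hmem : sSup T + δ ∈ T := ⟨by linarith [hδpos],
    mem_of_mem_orthThickening (Submodule.sub_mem _ (Submodule.subset_span ha)
      (Submodule.smul_mem _ _ hb)) (interior_subset hδ)⟩
  linarith [le_csSup hTbdd hmem, hδpos]

variable [FiniteDimensional ℝ V]

lemma IsClosedConvexCone.interior_orthThickening_nonempty (hK : IsClosedConvexCone K) :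
    (interior (orthThickening K)).Nonempty := by
  have h0 : (0 : V) ∈ orthThickening K := subset_orthThickening hK.zero_mem
  rw [hK.convex.orthThickening.interior_nonempty_iff_affineSpan_eq_top,
    ← AffineSubspace.coe_eq_univ_iff, ← insert_eq_of_mem h0, affineSpan_insert_zero,
    Submodule.coe_eq_univ, eq_top_iff,
    ← (Submodule.span ℝ K).sup_orthogonal_of_hasOrthogonalProjection]
  exact sup_le (Submodule.span_mono subset_orthThickening)
    fun p hp => Submodule.subset_span (orthogonal_subset_orthThickening hK.zero_mem hp)

lemma IsClosedConvexCone.exists_supporting_of_notMem_interior (hK : IsClosedConvexCone K)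
    {a : V} (ha : a ∈ K) (hint : a ∉ interior (orthThickening K)) :
    ∃ v : V, (∀ y ∈ K, ⟪v, y⟫ ≤ 0) ∧ ⟪v, a⟫ = 0 ∧ ∃ k ∈ K, ⟪v, k⟫ < 0 := by
  obtain ⟨f, c, hf0, hfS, hfa⟩ := geometric_hahn_banach_of_nonempty_interior
    hK.convex.orthThickening (convex_singleton a) (disjoint_singleton_right.2 hint)
    hK.interior_orthThickening_nonempty (singleton_nonempty a)
  have hv (x : V) : ⟪(InnerProductSpace.toDual ℝ V).symm f, x⟫ = f x :=
    InnerProductSpace.toDual_symm_apply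
  have hle : ∀ z ∈ orthThickening K, f z ≤ f a := fun z hz => (hfS z hz).trans (hfa a rfl)
  have hfa0 : f a = 0 := by
    have h2 := hle _ (subset_orthThickening (hK.smul_mem zero_le_two ha))
    have h0 := hle _ (subset_orthThickening hK.zero_mem)
    rw [map_smul, smul_eq_mul] at h2
    rw [map_zero] at h0
    linarith
  have hKle : ∀ y ∈ K, f y ≤ 0 := fun y hy => hfa0 ▸ hle y (subset_orthThickening hy)
  refine ⟨_, fun y hy => (hv y).trans_le (hKle y hy), (hv a).trans hfa0, ?_⟩
  by_contra! hpos
  -- otherwise `f` vanishes on `span K` and on its orthogonal complement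
  have hker : (⊤ : Submodule ℝ V) ≤ LinearMap.ker (f : V →ₗ[ℝ] ℝ) := by
    rw [← (Submodule.span ℝ K).sup_orthogonal_of_hasOrthogonalProjection]
    refine sup_le (Submodule.span_le.2 fun k hk => ?_) fun p hp => ?_
    · exact le_antisymm (hKle k hk) (hv k ▸ hpos k hk)
    · have h1 := hle p (orthogonal_subset_orthThickening hK.zero_mem hp)
      have h2 := hle (-p) (orthogonal_subset_orthThickening hK.zero_mem (neg_mem hp))
      rw [map_neg] at h2
      change f p = 0
      linarith
  exact hf0 (ContinuousLinearMap.ext fun x => hker Submodule.mem_top)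

end RelativeBoundary

section PositiveHull

variable {S S' : Set V} {x y : V}

lemma zero_mem_posHull : (0 : V) ∈ posHull S :=
  ⟨0, ![], ![], finZeroElim, finZeroElim, by simp⟩

lemma subset_posHull : S ⊆ posHull S := fun x hx =>
  ⟨1, fun _ => 1, fun _ => x, fun _ => zero_le_one, fun _ => hx, by simp⟩

lemma posHull_mono (h : S ⊆ S') : posHull S ⊆ posHull S' := by
  rintro _ ⟨k, c, s, hc, hs, rfl⟩
  exact ⟨k, c, s, hc, fun i => h (hs i), rfl⟩

lemma add_mem_posHull (hx : x ∈ posHull S) (hy : y ∈ posHull S) : x + y ∈ posHull S := by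
  obtain ⟨k, c, s, hc, hs, rfl⟩ := hx
  obtain ⟨l, c', s', hc', hs', rfl⟩ := hy
  refine ⟨k + l, Fin.append c c', Fin.append s s', fun i => ?_, fun i => ?_,
    by simp [Fin.sum_univ_add]⟩
  · cases i using Fin.addCases <;> simp [hc, hc']
  · cases i using Fin.addCases <;> simp [hs, hs']

lemma smul_mem_posHull {t : ℝ} (ht : 0 ≤ t) (hx : x ∈ posHull S) : t • x ∈ posHull S := by
  obtain ⟨k, c, s, hc, hs, rfl⟩ := hx
  exact ⟨k, t • c, s, fun i => mul_nonneg ht (hc i), hs, by simp [Finset.smul_sum, smul_smul]⟩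

lemma exists_coeff_eq_zero_of_not_linearIndependent {ι : Type*} [Fintype ι] {c : ι → ℝ}
    {w : ι → V} (hc : ∀ i, 0 ≤ c i) (hw : ¬ LinearIndependent ℝ w) :
    ∃ c' : ι → ℝ, (∀ i, 0 ≤ c' i) ∧ (∃ i, c' i = 0) ∧ ∑ i, c' i • w i = ∑ i, c i • w i := by
  classical
  obtain ⟨g, hg, i₁, hi₁⟩ := Fintype.not_linearIndependent_iff.1 hw
  wlog hpos : 0 < g i₁ generalizing g
  · refine this (-g) (by simp [neg_smul, hg]) (neg_ne_zero.2 hi₁) ?_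
    simpa using lt_of_le_of_ne (not_lt.1 hpos) hi₁
  -- subtract the largest multiple of the relation `g` that keeps all coefficients nonnegative
  obtain ⟨i₂, hi₂, hmin⟩ := (Finset.univ.filter fun i => 0 < g i).exists_min_image
    (fun i => c i / g i) ⟨i₁, by simp [hpos]⟩
  have hgi₂ : 0 < g i₂ := (Finset.mem_filter.1 hi₂).2
  have hr : 0 ≤ c i₂ / g i₂ := div_nonneg (hc i₂) hgi₂.le
  refine ⟨fun i => c i - c i₂ / g i₂ * g i, fun i => ?_,
    ⟨i₂, by simp [div_mul_cancel₀ _ hgi₂.ne']⟩, ?_⟩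
  · rcases lt_or_ge 0 (g i) with hgi | hgi
    · have := hmin i (by simp [hgi])
      rw [le_div_iff₀ hgi] at this
      linarith
    · nlinarith [hc i]
  · simp only [sub_smul, mul_smul, Finset.sum_sub_distrib, ← Finset.smul_sum, hg, smul_zero,
      sub_zero]

theorem exists_linearIndependent_of_mem_posHull (hx : x ∈ posHull S) :
    ∃ (d : ℕ) (c : Fin d → ℝ) (w : Fin d → V), (∀ i, 0 < c i) ∧ (∀ i, w i ∈ S) ∧
      LinearIndependent ℝ w ∧ x = ∑ i, c i • w i := by
  obtain ⟨k, c, w, hc, hw, rfl⟩ := hx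
  induction k with
  | zero => exact ⟨0, ![], ![], finZeroElim, finZeroElim, linearIndependent_empty_type, by simp⟩
  | succ k ih =>
    by_cases h : (∀ i, 0 < c i) ∧ LinearIndependent ℝ w
    · exact ⟨_, c, w, h.1, hw, h.2, rfl⟩
    obtain ⟨c', hc', ⟨i, hi⟩, hsum⟩ : ∃ c' : Fin (k + 1) → ℝ, (∀ i, 0 ≤ c' i) ∧
        (∃ i, c' i = 0) ∧ ∑ i, c' i • w i = ∑ i, c i • w i := by
      rcases not_and_or.1 h with h | h
      · push Not at h
        obtain ⟨i, hi⟩ := h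
        exact ⟨c, hc, ⟨i, le_antisymm hi (hc i)⟩, rfl⟩
      · exact exists_coeff_eq_zero_of_not_linearIndependent hc h
    obtain ⟨d, c'', w'', hc'', hw'', hli, hsum'⟩ :=
      ih (fun j => c' (i.succAbove j)) (fun j => w (i.succAbove j)) (fun j => hc' _) fun j => hw _
    refine ⟨d, c'', w'', hc'', hw'', hli, ?_⟩
    rw [← hsum, Fin.sum_univ_succAbove _ i, hi, zero_smul, zero_add, hsum']

end PositiveHull

section ExtremeRays

def rayOf (w : V) : Set V := {x | ∃ t : ℝ, 0 ≤ t ∧ x = t • w}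

lemma self_mem_rayOf (w : V) : w ∈ rayOf w := ⟨1, zero_le_one, (one_smul ℝ w).symm⟩

variable {K : Set V}

lemma IsClosedConvexCone.eq_rayOf (hK : IsClosedConvexCone K) (hsal : ∀ x ∈ K, -x ∈ K → x = 0)
    {u : V} (hu : u ∈ K) (hu0 : u ≠ 0) (h : ∀ y ∈ K, ∃ t : ℝ, y = t • u) : K = rayOf u := by
  ext y
  refine ⟨fun hy => ?_, fun ⟨t, ht, hy⟩ => hy ▸ hK.smul_mem ht hu⟩
  obtain ⟨t, rfl⟩ := h y hy
  refine ⟨t, not_lt.1 fun ht => hu0 (hsal u hu ?_), rfl⟩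
  simpa [smul_smul, inv_mul_cancel₀ ht.ne] using hK.smul_mem (neg_nonneg.2 (inv_nonpos.2 ht.le)) hy

theorem IsClosedConvexCone.mem_posHull_extremeRays [FiniteDimensional ℝ V]
    (hK : IsClosedConvexCone K) (hsal : ∀ x ∈ K, -x ∈ K → x = 0) {u : V} (hu : u ∈ K) :
    u ∈ posHull {w | IsFace K (rayOf w)} := by
  induction hn : finrank ℝ (Submodule.span ℝ K) using Nat.strong_induction_on
    generalizing K u with
  | _ n ih =>
  have hbdry : ∀ v ∈ K, v ∉ interior (orthThickening K) →
      v ∈ posHull {w | IsFace K (rayOf w)} := by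
    intro v hv hint
    obtain ⟨f, hfK, hfv, k, hk, hfk⟩ := hK.exists_supporting_of_notMem_interior hv hint
    have hker : Submodule.span ℝ (expFace K f) ≤ LinearMap.ker (innerₛₗ ℝ f) :=
      Submodule.span_le.2 fun x hx => ((hK.mem_expFace_iff hfK).1 hx).2
    have hlt : finrank ℝ (Submodule.span ℝ (expFace K f)) < n := by
      refine hn ▸ Submodule.finrank_lt_finrank_of_lt
        (lt_of_le_of_ne (Submodule.span_mono expFace_subset) fun heq => hfk.ne ?_)
      exact hker (heq ▸ Submodule.subset_span hk)
    exact posHull_mono (fun w hw => (isFace_expFace hK.convex f).trans hw)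
      (ih _ hlt (isClosedConvexCone_expFace hK hfK) (fun x hx hnx => hsal x hx.1 hnx.1)
        ((hK.mem_expFace_iff hfK).2 ⟨hv, hfv⟩) rfl)
  rcases eq_or_ne u 0 with rfl | hu0
  · exact zero_mem_posHull
  by_cases hray : ∀ y ∈ K, ∃ t : ℝ, y = t • u
  · refine subset_posHull (?_ : IsFace K (rayOf u))
    rw [← hK.eq_rayOf hsal hu hu0 hray]
    exact isFace_self hK.convex
  push Not at hray
  obtain ⟨y, hy, hyu⟩ := hray
  -- `u` is a positive combination of two relative boundary points of `K`
  obtain ⟨s, -, hz, hzb⟩ := hK.exists_sub_smul_notMem_interior hy (Submodule.subset_span hu)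
    fun h => hu0 (hsal u hu h)
  have hz0 : y - s • u ≠ 0 := fun h => hyu s (sub_eq_zero.1 h)
  obtain ⟨s', hs', hu', hu'b⟩ := hK.exists_sub_smul_notMem_interior hu
    (Submodule.subset_span hz) fun h => hz0 (hsal _ hz h)
  rw [show u = (u - s' • (y - s • u)) + s' • (y - s • u) by abel]
  exact add_mem_posHull (hbdry _ hu' hu'b) (smul_mem_posHull hs' (hbdry _ hz hzb))

end ExtremeRays

section NormalCones

variable {C S : Set V} {v : V}

lemma mem_normalConeOf_iff (hS : S ⊆ C) :
    v ∈ normalConeOf C S ↔ intrinsicInterior ℝ S ⊆ expFace C v := by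
  simp only [normalConeOf, mem_iInter₂]
  exact forall₂_congr fun x hx =>
    (mem_expFace_iff_mem_normalCone (hS (intrinsicInterior_subset hx))).symm

lemma isClosedConvexCone_normalConeOf (C S : Set V) : IsClosedConvexCone (normalConeOf C S) :=
  IsClosedConvexCone.biInter fun x _ => by
    have : normalCone C x = ⋂ y ∈ C, {u | ⟪u, y - x⟫ ≤ 0} := by
      ext
      simp [normalCone]
    exact this ▸ IsClosedConvexCone.biInter fun y _ => isClosedConvexCone_halfSpace (y - x)

lemma add_mem_normalConeOf (hS : S ⊆ C) {l : V} (hv : v ∈ normalConeOf C S)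
    (hl : l ∈ (affineSpan ℝ C).directionᗮ) : v + l ∈ normalConeOf C S := by
  rwa [mem_normalConeOf_iff hS, expFace_add_of_mem_orthogonal hl, ← mem_normalConeOf_iff hS]

lemma eq_zero_of_mem_normalConeOf (hS : S ⊆ C) (hne : (intrinsicInterior ℝ S).Nonempty)
    (hv : v ∈ normalConeOf C S) (hnv : -v ∈ normalConeOf C S)
    (hvD : v ∈ (affineSpan ℝ C).direction) : v = 0 := by
  obtain ⟨x, hx⟩ := hne
  have h₁ := (mem_normalConeOf_iff hS).1 hv hx
  have h₂ := (mem_normalConeOf_iff hS).1 hnv hx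
  have hvL : v ∈ (affineSpan ℝ C).directionᗮ :=
    mem_orthogonal_of_forall_inner_sub_eq_zero h₁.1 fun y hy => by
      have := h₂.2 y hy
      rw [inner_neg_left, inner_neg_left, neg_le_neg_iff] at this
      rw [inner_sub_right]
      linarith [h₁.2 y hy]
  exact inner_self_eq_zero.1 (hvL v hvD)

lemma isFace_orthogonal_add {N R : Set V} (W : Submodule ℝ V) [W.HasOrthogonalProjection]
    (hN : ∀ v ∈ N, ∀ l ∈ Wᗮ, v + l ∈ N) (hR : IsFace (N ∩ W) R) :
    IsFace N ((Wᗮ : Set V) + R) := by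
  obtain ⟨hRc, hRN, hRext⟩ := hR
  have hproj : ∀ x ∈ N, W.starProjection x ∈ N ∩ W := fun x hx =>
    ⟨by simpa using hN x hx _ (neg_mem (W.sub_starProjection_mem_orthogonal x)),
      W.starProjection_apply_mem x⟩
  have hmem : ∀ x, W.starProjection x ∈ R → x ∈ (Wᗮ : Set V) + R := fun x hx =>
    ⟨_, W.sub_starProjection_mem_orthogonal x, _, hx, sub_add_cancel _ _⟩
  refine ⟨(Submodule.convex _).add hRc, ?_, ?_⟩
  · intro z hz
    obtain ⟨l, hl, r, hr, rfl⟩ := Set.mem_add.1 hz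
    rw [add_comm]
    exact hN r (hRN hr).1 l hl
  · rintro x hx y hy ⟨_, ⟨a, b, ha, hb, hab, rfl⟩, l, hl, r, hr, hz⟩
    -- project the segment onto `W`, where `R` is a face of `N ∩ W`
    have hPz : a • W.starProjection x + b • W.starProjection y = r := by
      have := congrArg W.starProjection hz
      rwa [map_add, W.starProjection_apply_eq_zero_iff.2 hl, zero_add,
        W.starProjection_eq_self_iff.2 (hRN hr).2, map_add, map_smul, map_smul, eq_comm] at this
    obtain ⟨hxR, hyR⟩ := hRext _ (hproj x hx) _ (hproj y hy) ⟨r, ⟨a, b, ha, hb, hab, hPz⟩, hr⟩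
    exact ⟨hmem x hxR, hmem y hyR⟩

end NormalCones

section Coatoms

variable {C : Set V}

def IsExpFaceCoatom (C G : Set V) : Prop :=
  IsExpFace C G ∧ G ≠ ∅ ∧ G ≠ C ∧ ∀ G', IsExpFace C G' → G ⊆ G' → G ≠ G' → G' = C

lemma isExpFaceCoatom_expFace [FiniteDimensional ℝ V] {Fi : Set V} {w : V} (hFi : IsFace C Fi)
    (hT : normalConeOf C Fi = ((affineSpan ℝ C).directionᗮ : Set V) + rayOf w)
    (hw : w ∉ (affineSpan ℝ C).directionᗮ) : IsExpFaceCoatom C (expFace C w) := by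
  set L := (affineSpan ℝ C).directionᗮ
  have hmem {v : V} : v ∈ normalConeOf C Fi ↔ ∃ l ∈ L, ∃ t : ℝ, 0 ≤ t ∧ l + t • w = v := by
    simp [hT, Set.mem_add, rayOf]
  have hri : intrinsicInterior ℝ Fi ⊆ expFace C w :=
    (mem_normalConeOf_iff hFi.2.1).1 (hmem.2 ⟨0, L.zero_mem, 1, zero_le_one, by simp⟩)
  have hFi_ne : Fi.Nonempty := by
    rw [nonempty_iff_ne_empty]
    rintro rfl
    obtain ⟨l, hl, t, ht, h⟩ := hmem.1 (by simp [normalConeOf] : -w ∈ normalConeOf C ∅)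
    have : w = (1 + t)⁻¹ • -l := by
      rw [eq_inv_smul_iff₀ (by positivity), eq_neg_iff_add_eq_zero,
        show (1 + t) • w + l = l + t • w + w by module, h, neg_add_cancel]
    exact hw (this ▸ L.smul_mem _ (L.neg_mem hl))
  have hne : (expFace C w).Nonempty := (hFi_ne.intrinsicInterior hFi.1).mono hri
  have hC : C.Nonempty := hne.mono expFace_subset
  refine ⟨Or.inr (Or.inr ⟨w, fun h => hw (h ▸ L.zero_mem), rfl⟩), hne.ne_empty,
    fun h => hw ((expFace_eq_self_iff hC).1 h), ?_⟩
  rintro G' (rfl | rfl | ⟨w', -, rfl⟩) hsub hne'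
  · exact absurd (subset_empty_iff.1 hsub) hne.ne_empty
  · rfl
  · obtain ⟨l, hl, t, ht, rfl⟩ := hmem.1 ((mem_normalConeOf_iff hFi.2.1).2 (hri.trans hsub))
    rcases ht.eq_or_lt with rfl | ht
    · rw [zero_smul, add_zero]
      exact (expFace_eq_self_iff hC).2 hl
    · rw [add_comm, expFace_add_of_mem_orthogonal hl, expFace_smul ht] at hne'
      exact absurd rfl hne'

lemma expFace_sum_eq_iInter {ι : Type*} [Fintype ι] [Nonempty ι] {c : ι → ℝ} {w : ι → V}
    {x₀ : V} (hc : ∀ i, 0 < c i) (hx₀ : ∀ i, x₀ ∈ expFace C (w i)) :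
    expFace C (∑ i, c i • w i) = ⋂ i, expFace C (w i) := by
  have hsum (x y : V) : ⟪∑ i, c i • w i, y - x⟫ = ∑ i, c i * ⟪w i, y - x⟫ := by
    simp [sum_inner, real_inner_smul_left]
  have hx₀C : x₀ ∈ C := (hx₀ (Classical.arbitrary ι)).1
  ext x
  simp only [mem_iInter]
  constructor
  · intro hx i
    -- every term of `⟪∑ i, c i • w i, x₀ - x⟫ ≤ 0` is nonnegative, hence zero
    have hterm (j : ι) : 0 ≤ c j * ⟪w j, x₀ - x⟫ := mul_nonneg (hc j).le (by
      rw [inner_sub_right, sub_nonneg]; exact (hx₀ j).2 x hx.1)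
    have hzero := (Finset.sum_eq_zero_iff_of_nonneg fun j _ => hterm j).1 (le_antisymm
      (by rw [← hsum, inner_sub_right, sub_nonpos]; exact hx.2 x₀ hx₀C)
      (Finset.sum_nonneg fun j _ => hterm j)) i (Finset.mem_univ i)
    rw [mul_eq_zero, inner_sub_right, sub_eq_zero] at hzero
    refine ⟨hx.1, fun y hy => ?_⟩
    rw [← hzero.resolve_left (hc i).ne']
    exact (hx₀ i).2 y hy
  · intro hx
    refine ⟨(hx (Classical.arbitrary ι)).1, fun y hy => ?_⟩
    have : ⟪∑ i, c i • w i, y - x⟫ ≤ 0 := by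
      rw [hsum]
      refine Finset.sum_nonpos fun i _ => mul_nonpos_of_nonneg_of_nonpos (hc i).le ?_
      rw [inner_sub_right, sub_nonpos]
      exact (hx i).2 y hy
    rwa [inner_sub_right, sub_nonpos] at this

end Coatoms

lemma card_add_finrank_le_finrank_direction [FiniteDimensional ℝ V] {S : Set V} (h0 : 0 ∈ S)
    {W : Submodule ℝ V} (hW : (W : Set V) ⊆ S) {ι : Type*} [Fintype ι] {w : ι → V}
    (hli : LinearIndependent ℝ w) (hwS : ∀ i, w i ∈ S) (hwW : ∀ i, w i ∈ Wᗮ) :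
    Fintype.card ι + finrank ℝ W ≤ finrank ℝ (affineSpan ℝ S).direction := by
  have hdisj : Submodule.span ℝ (range w) ⊓ W = ⊥ := by
    refine eq_bot_iff.2 fun x hx => ?_
    have hxW : x ∈ Wᗮ := Submodule.span_le.2 (range_subset_iff.2 hwW) hx.1
    exact inner_self_eq_zero.1 (hxW x hx.2)
  calc Fintype.card ι + finrank ℝ W
      = finrank ℝ ↥(Submodule.span ℝ (range w) ⊔ W) := by
        rw [← finrank_span_eq_card hli, ← Submodule.finrank_sup_add_finrank_inf_eq, hdisj,
          finrank_bot, add_zero]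
    _ ≤ finrank ℝ (affineSpan ℝ S).direction := by
        rw [direction_affineSpan, vectorSpan_eq_span_vsub_set_right ℝ h0]
        refine Submodule.finrank_mono (sup_le (Submodule.span_le.2 ?_) fun x hx => ?_)
        · rintro _ ⟨i, rfl⟩
          exact Submodule.subset_span ⟨w i, hwS i, by simp⟩
        · exact Submodule.subset_span ⟨x, hW hx, by simp⟩

theorem exists_extremeRay_decomposition [FiniteDimensional ℝ V] {C : Set V} {u : V}
    (hne : (intrinsicInterior ℝ (expFace C u)).Nonempty) :
    ∃ (d : ℕ) (c : Fin d → ℝ) (w : Fin d → V), (∀ i, 0 < c i) ∧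
      (∀ i, IsFace (normalConeOf C (expFace C u) ∩ (affineSpan ℝ C).direction)
        (rayOf (w i))) ∧
      LinearIndependent ℝ w ∧ expFace C u = expFace C (∑ i, c i • w i) := by
  set D := (affineSpan ℝ C).direction
  have hsub : expFace C u ⊆ C := expFace_subset
  have hFk : expFace C u = expFace C (D.starProjection u) := by
    rw [← expFace_add_of_mem_orthogonal (D.sub_starProjection_mem_orthogonal u)
      (D.starProjection u), add_sub_cancel]
  have hkN : D.starProjection u ∈ normalConeOf C (expFace C u) := by
    have huN := (mem_normalConeOf_iff hsub (v := u)).2 intrinsicInterior_subset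
    simpa using add_mem_normalConeOf hsub huN (neg_mem (D.sub_starProjection_mem_orthogonal u))
  obtain ⟨d, c, w, hc, hw, hli, hk⟩ := exists_linearIndependent_of_mem_posHull <|
    ((isClosedConvexCone_normalConeOf C _).inter D.isClosedConvexCone).mem_posHull_extremeRays
      (fun v hv hnv => eq_zero_of_mem_normalConeOf hsub hne hv.1 hnv.1 hv.2)
      ⟨hkN, D.starProjection_apply_mem u⟩
  exact ⟨d, c, w, hc, hw, hli, hk ▸ hFk⟩

/-- Let `F` be a proper exposed face of a convex set `C` such that every
touching cone of `C` contained in `N(C,F)` is a normal cone of `C`. Then `F` is an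
intersection of at most `dim N(C,F) − dim lin(C)^⊥` coatoms of the exposed face lattice
of `C`. -/
theorem stmt_17 (C : Set E) (hC : Convex ℝ C) (F : Set E) (hF : IsExpFace C F)
    (hFne : F ≠ ∅) (hFC : F ≠ C)
    (hTC : ∀ T, IsTouchingCone C T → T ⊆ normalConeOf C F → IsNormalCone C T) :
    ∃ (d : ℕ) (G : Fin d → Set E),
      d ≤ Module.finrank ℝ (affineSpan ℝ (normalConeOf C F)).direction -
            Module.finrank ℝ (((affineSpan ℝ C).direction)ᗮ : Submodule ℝ E) ∧
      (∀ i, IsExpFace C (G i) ∧ G i ≠ ∅ ∧ G i ≠ C ∧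
        ∀ G', IsExpFace C G' → G i ⊆ G' → G i ≠ G' → G' = C) ∧
      F = ⋂ i, G i := by
  obtain ⟨u, -, rfl⟩ := (hF.resolve_left hFne).resolve_left hFC
  set D := (affineSpan ℝ C).direction
  set N := normalConeOf C (expFace C u)
  have hface := isFace_expFace hC u
  obtain ⟨x₀, hx₀⟩ := (nonempty_iff_ne_empty.2 hFne).intrinsicInterior hface.1
  obtain ⟨d, c, w, hc, hw, hli, hFw⟩ := exists_extremeRay_decomposition ⟨x₀, hx₀⟩
  have hwN (i : Fin d) : w i ∈ N ∩ D := (hw i).2.1 (self_mem_rayOf _)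
  have hNL : ∀ v ∈ N, ∀ l ∈ Dᗮ, v + l ∈ N := fun _ hv _ hl => add_mem_normalConeOf hface.2.1 hv hl
  have hT (i : Fin d) : IsNormalCone C ((Dᗮ : Set E) + rayOf (w i)) := by
    have hTface := isFace_orthogonal_add D hNL (hw i)
    exact hTC _ ⟨⟨w i, 0, Dᗮ.zero_mem, w i, self_mem_rayOf _, zero_add _⟩,
      N, ⟨_, hface, rfl⟩, hTface⟩ hTface.2.1
  choose Fi hFi hTFi using hT
  have hwD (i : Fin d) : w i ∉ Dᗮ := fun h => hli.ne_zero i (inner_self_eq_zero.1 (h _ (hwN i).2))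
  have : Nonempty (Fin d) := Fin.pos_iff_nonempty.1 <| Nat.pos_of_ne_zero fun hd =>
    hFC (by subst hd; simp [hFw, expFace_zero])
  refine ⟨d, fun i => expFace C (w i), ?_,
    fun i => isExpFaceCoatom_expFace (hFi i) (hTFi i).symm (hwD i), ?_⟩
  · have hN0 : (0 : E) ∈ N := (isClosedConvexCone_normalConeOf C _).zero_mem
    have := card_add_finrank_le_finrank_direction hN0
      (fun l hl => by simpa using hNL 0 hN0 l hl) hli
      (fun i => (hwN i).1) fun i => D.le_orthogonal_orthogonal (hwN i).2
    rw [Fintype.card_fin] at this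
    omega
  · rw [hFw, expFace_sum_eq_iInter hc fun i => (mem_normalConeOf_iff hface.2.1).1 (hwN i).1 hx₀]
end

section
/- Let K ⊆ E be a compact convex set and let F be a proper exposed face of K such that every face of K contained in F is an exposed face of K. Then F can be written as a supremum of at most dim(F)+1 atoms of the exposed face lattice of K: there exist nonempty exposed faces A_1, …, A_d of K, each such that the only exposed face of K strictly contained in it is ∅, with d ≤ dim(F) + 1, such that F is the smallest exposed face of K containing A_1 ∪ ⋯ ∪ A_d. -/
open scoped Pointwise RealInnerProductSpace

variable {E : Type*} [NormedAddCommGroup E] [InnerProductSpace ℝ E] [FiniteDimensional ℝ E]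

/-!
By Krein–Milman, a compact convex set `F` lies in the closure of the convex hull of its extreme
points, hence (in finite dimension) in their affine span. Choosing an affine basis of that span
among the extreme points gives at most `dim F + 1` of them. Their singletons are faces of `K`,
hence exposed by hypothesis, and they are atoms. An exposed face `{⟨u, ·⟩ = max}` of `K`
containing them contains `K ∩ aff F ⊇ F`, because `⟨u, ·⟩` is constant on their affine span,
which is `aff F`; so `F` is their supremum.
-/

open Set

omit [FiniteDimensional ℝ E] in
lemma IsExpFace.isExposed {C F : Set E} (h : IsExpFace C F) : IsExposed ℝ C F := by
  rcases h with rfl | rfl | ⟨u, -, rfl⟩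
  · exact isExposed_empty
  · exact IsExposed.refl _
  · exact fun _ => ⟨innerSL ℝ u, by ext; simp [expFace]⟩

omit [FiniteDimensional ℝ E] in
lemma IsExtreme.isFace {C F : Set E} (h : IsExtreme ℝ C F) (hF : Convex ℝ F) : IsFace C F :=
  ⟨hF, h.subset, fun _ hx _ hy ⟨_, hzxy, hzF⟩ =>
    ⟨h.left_mem_of_mem_openSegment hx hy hzF hzxy, h.right_mem_of_mem_openSegment hx hy hzF hzxy⟩⟩

omit [FiniteDimensional ℝ E] in
lemma inter_affineSpan_subset_expFace {C S : Set E} {u : E} (hS : S ⊆ expFace C u) :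
    C ∩ affineSpan ℝ S ⊆ expFace C u := by
  rintro x ⟨hxC, hxS⟩
  obtain ⟨s, hs⟩ : S.Nonempty := by
    rw [nonempty_iff_ne_empty]
    rintro rfl
    simp at hxS
  have hker : vectorSpan ℝ S ≤ LinearMap.ker (innerₛₗ ℝ u) := by
    refine Submodule.span_le.2 ?_
    rintro _ ⟨a, ha, b, hb, rfl⟩
    have hab := (hS hb).2 a (hS ha).1
    have hba := (hS ha).2 b (hS hb).1
    simp only [SetLike.mem_coe, LinearMap.mem_ker, innerₛₗ_apply_apply, vsub_eq_sub,
      inner_sub_right]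
    linarith
  have hxs : ⟪u, x - s⟫ = 0 := by
    refine hker ?_
    rw [← direction_affineSpan]
    exact AffineSubspace.vsub_mem_direction hxS (mem_affineSpan ℝ hs)
  refine ⟨hxC, fun y hy => ?_⟩
  rw [inner_sub_right] at hxs
  linarith [(hS hs).2 y hy]

lemma subset_affineSpan_extremePoints {F : Set E} (hFc : IsCompact F) (hFconv : Convex ℝ F) :
    F ⊆ affineSpan ℝ (F.extremePoints ℝ) :=
  calc F = closure (convexHull ℝ (F.extremePoints ℝ)) :=
        (closure_convexHull_extremePoints hFc hFconv).symm
    _ ⊆ closure (affineSpan ℝ (F.extremePoints ℝ)) := closure_mono (convexHull_subset_affineSpan _)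
    _ = affineSpan ℝ (F.extremePoints ℝ) :=
        (AffineSubspace.closed_of_finiteDimensional _).closure_eq

lemma exists_extremePoints_subset_affineSpan {F : Set E} (hFc : IsCompact F)
    (hFconv : Convex ℝ F) :
    ∃ (d : ℕ) (z : Fin d → E), d ≤ Module.finrank ℝ (affineSpan ℝ F).direction + 1 ∧
      (∀ i, z i ∈ F.extremePoints ℝ) ∧ F ⊆ affineSpan ℝ (range z) := by
  obtain ⟨t, hte, hspan, hind⟩ := exists_affineIndependent ℝ E (F.extremePoints ℝ)
  have := finite_of_fin_dim_affineIndependent ℝ hind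
  set e := Finite.equivFin t
  have hrange : range ((↑) ∘ e.symm : Fin (Nat.card t) → E) = t := by
    rw [e.symm.surjective.range_comp, Subtype.range_coe]
  refine ⟨Nat.card t, (↑) ∘ e.symm, ?_, fun i => hte (e.symm i).2, ?_⟩
  · have hcard := (hind.comp_embedding e.symm.toEmbedding).card_le_finrank_succ
    have hmono : vectorSpan ℝ (range ((↑) ∘ e.symm : Fin (Nat.card t) → E)) ≤ vectorSpan ℝ F :=
      vectorSpan_mono ℝ (hrange.symm ▸ hte.trans extremePoints_subset)
    rw [Fintype.card_fin] at hcard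
    rw [direction_affineSpan]
    exact hcard.trans (Nat.add_le_add_right (Submodule.finrank_mono hmono) 1)
  · rw [hrange, hspan]
    exact subset_affineSpan_extremePoints hFc hFconv

omit [FiniteDimensional ℝ E] in
lemma supExp_eq_of_subset_affineSpan {C F S : Set E} (hF : IsExpFace C F) (hSF : S ⊆ F)
    (hFS : F ⊆ affineSpan ℝ S) : supExp C S = F := by
  refine (sInter_subset_of_mem (show F ∈ {G | IsExpFace C G ∧ S ⊆ G} from ⟨hF, hSF⟩)).antisymm
    (subset_sInter ?_)
  rintro G ⟨hG, hSG⟩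
  rcases (hG : IsExpFace C G) with rfl | rfl | ⟨u, -, rfl⟩
  · rw [subset_empty_iff] at hSG
    subst hSG
    simpa using hFS
  · exact hF.isExposed.subset
  · exact fun x hx => inter_affineSpan_subset_expFace hSG ⟨hF.isExposed.subset hx, hFS hx⟩

theorem stmt_19_general (K : Set E) (hK : Convex ℝ K) (hKc : IsCompact K)
    (F : Set E) (hF : IsExpFace K F)
    (hall : ∀ G, IsFace K G → G ⊆ F → IsExpFace K G) :
    ∃ (d : ℕ) (A : Fin d → Set E),
      d ≤ Module.finrank ℝ (affineSpan ℝ F).direction + 1 ∧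
      (∀ i, IsExpFace K (A i) ∧ (A i).Nonempty ∧
        ∀ A', IsExpFace K A' → A' ⊆ A i → A' ≠ A i → A' = ∅) ∧
      F = supExp K (⋃ i, A i) := by
  have hFexp := hF.isExposed
  obtain ⟨d, z, hd, hzF, hFz⟩ :=
    exists_extremePoints_subset_affineSpan (hFexp.isCompact hKc) (hFexp.convex hK)
  have hzFace i : IsFace K {z i} :=
    (isExtreme_singleton.2 (hFexp.isExtreme.extremePoints_subset_extremePoints (hzF i))).isFace
      (convex_singleton _)
  refine ⟨d, fun i => {z i}, hd, fun i => ⟨?_, singleton_nonempty _, ?_⟩, ?_⟩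
  · exact hall _ (hzFace i) (singleton_subset_iff.2 (hzF i).1)
  · exact fun A' _ hA' hne => (subset_singleton_iff_eq.1 hA').resolve_right hne
  · rw [iUnion_singleton_eq_range]
    exact (supExp_eq_of_subset_affineSpan hF (range_subset_iff.2 fun i => (hzF i).1) hFz).symm

/-- Let `K` be a compact convex set and `F` a proper exposed face of `K`
such that every face of `K` contained in `F` is exposed. Then `F` is the supremum (in the
exposed face lattice, i.e. the smallest exposed face containing the union) of at most
`dim F + 1` atoms of the exposed face lattice of `K`. -/
theorem stmt_19 (K : Set E) (hK : Convex ℝ K) (hKc : IsCompact K)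
    (F : Set E) (hF : IsExpFace K F) (hFne : F ≠ ∅) (hFK : F ≠ K)
    (hall : ∀ G, IsFace K G → G ⊆ F → IsExpFace K G) :
    ∃ (d : ℕ) (A : Fin d → Set E),
      d ≤ Module.finrank ℝ (affineSpan ℝ F).direction + 1 ∧
      (∀ i, IsExpFace K (A i) ∧ (A i).Nonempty ∧
        ∀ A', IsExpFace K A' → A' ⊆ A i → A' ≠ A i → A' = ∅) ∧
      F = supExp K (⋃ i, A i) :=
  stmt_19_general K hK hKc F hF hall
end
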